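/- Let Z be an ℝ^d-valued random variable with E[‖Z‖²] ≤ R², let ε₀ ~ N(0,τ²I_d) be independent of Z with τ > 0, and let X = Z + ε₀ with density p_X. Then E[‖∇log p_X(X)‖²] ≤ 3(2R² + dτ²)/τ⁴. -/

import Mathlib

open MeasureTheory ProbabilityTheory Real
open scoped ENNReal NNReal

noncomputable section

/-- `ℝ^d` with its Euclidean structure. -/
abbrev Vec (d : ℕ) := EuclideanSpace ℝ (Fin d)

/-- Density of the centered Gaussian measure `N(0, v·I_d)` on `ℝ^d`. -/
def gaussPDF (d : ℕ) (v : ℝ) (x : Vec d) : ℝ :=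
  (2 * Real.pi * v) ^ (-(d : ℝ) / 2) * Real.exp (-‖x‖ ^ 2 / (2 * v))

/-- The centered Gaussian measure `N(0, v·I_d)` on `ℝ^d`. -/
def gaussMeasure (d : ℕ) (v : ℝ) : Measure (Vec d) :=
  (volume : Measure (Vec d)).withDensity fun x => ENNReal.ofReal (gaussPDF d v x)

/-- The density of `X + N(0, v·I_d)` when `X ∼ μ`:
the convolution of `μ` with the Gaussian kernel. -/
def noisyDensity (d : ℕ) (μ : Measure (Vec d)) (v : ℝ) (y : Vec d) : ℝ :=
  ∫ x, gaussPDF d v (y - x) ∂μ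

/-- The `p`-Wasserstein distance between two measures: the infimum over all couplings `γ`
(measures on the product with the prescribed marginals) of `(∫ ‖z₁ - z₂‖ ^ p dγ)^(1/p)`. -/
def Wdist {E : Type*} [NormedAddCommGroup E] [MeasurableSpace E] (p : ℝ)
    (μ ν : Measure E) : ℝ :=
  sInf { c : ℝ | ∃ γ : Measure (E × E),
    γ.map Prod.fst = μ ∧ γ.map Prod.snd = ν ∧
    c = (∫ z : E × E, ‖z.1 - z.2‖ ^ p ∂γ) ^ (1 / p) }

/-- The characteristic function of (the law of) a random vector `Z` under `P`. -/
def charRV {Ω : Type*} [MeasurableSpace Ω] {d : ℕ} (P : Measure Ω)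
    (Z : Ω → Vec d) (ξ : Vec d) : ℂ :=
  ∫ ω, Complex.exp (Complex.I * ((inner ℝ ξ (Z ω) : ℝ) : ℂ)) ∂P

/-- The Hessian of `g : ℝ^d → ℝ` at `x`, as a continuous linear map
(the derivative of the gradient). -/
def hessian {d : ℕ} (g : Vec d → ℝ) (x : Vec d) : Vec d →L[ℝ] Vec d :=
  fderiv ℝ (gradient g) x

/-- The Laplacian of `g : ℝ^d → ℝ` at `x`: the trace of its Hessian. -/
def laplacian {d : ℕ} (g : Vec d → ℝ) (x : Vec d) : ℝ :=
  LinearMap.trace ℝ (Vec d) (hessian g x).toLinearMap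

set_option maxHeartbeats 1000000
set_option synthInstance.maxHeartbeats 1000000
set_option linter.unusedSectionVars false
set_option linter.deprecated false

section Statement12Aux

variable {d : ℕ} {v : ℝ}

lemma gaussPDF_pos (hv : 0 < v) (x : Vec d) : 0 < gaussPDF d v x := by
  unfold gaussPDF; positivity

lemma gaussPDF_nonneg (hv : 0 < v) (x : Vec d) : 0 ≤ gaussPDF d v x :=
  (gaussPDF_pos hv x).le

lemma gaussPDF_le (hv : 0 < v) (x : Vec d) :
    gaussPDF d v x ≤ (2 * Real.pi * v) ^ (-(d : ℝ) / 2) := by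
  have h1 : Real.exp (-‖x‖ ^ 2 / (2 * v)) ≤ 1 := by
    apply Real.exp_le_one_iff.mpr
    have : (0:ℝ) < 2 * v := by linarith
    exact div_nonpos_of_nonpos_of_nonneg (neg_nonpos.mpr (by positivity)) this.le
  calc gaussPDF d v x ≤ (2 * Real.pi * v) ^ (-(d : ℝ) / 2) * 1 := by
        unfold gaussPDF
        apply mul_le_mul_of_nonneg_left h1 (by positivity)
    _ = _ := mul_one _

lemma continuous_gaussPDF (hv : 0 < v) : Continuous (gaussPDF d v) := by
  unfold gaussPDF; fun_prop

/-- key scalar bound `t e^{-t/c} ≤ c / e`. -/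
lemma mul_exp_neg_div_le {c t : ℝ} (hc : 0 < c) (ht : 0 ≤ t) :
    t * Real.exp (-(t / c)) ≤ c / Real.exp 1 := by
  have h1 : t / c ≤ Real.exp (t / c - 1) := by
    have := Real.add_one_le_exp (t / c - 1); linarith
  have h2 : t * Real.exp (-(t / c)) ≤ c * (Real.exp (t / c - 1) * Real.exp (-(t / c))) := by
    have hE : 0 < Real.exp (-(t / c)) := Real.exp_pos _
    have : t ≤ c * Real.exp (t / c - 1) := by
      calc t = c * (t / c) := by field_simp
        _ ≤ c * Real.exp (t / c - 1) := by
            apply mul_le_mul_of_nonneg_left h1 hc.le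
    nlinarith
  calc t * Real.exp (-(t / c)) ≤ c * (Real.exp (t / c - 1) * Real.exp (-(t / c))) := h2
    _ = c * Real.exp (-1) := by rw [← Real.exp_add]; ring_nf
    _ = c / Real.exp 1 := by rw [Real.exp_neg]; ring

lemma norm_mul_gaussPDF_le (hv : 0 < v) (x : Vec d) :
    ‖x‖ * gaussPDF d v x ≤ (2 * Real.pi * v) ^ (-(d : ℝ) / 2) * (1 + 2 * v) := by
  set A : ℝ := (2 * Real.pi * v) ^ (-(d : ℝ) / 2) with hA
  have hA0 : 0 < A := by rw [hA]; positivity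
  have hE : Real.exp (-‖x‖ ^ 2 / (2 * v)) ≤ 1 := by
    apply Real.exp_le_one_iff.mpr
    have : (0:ℝ) < 2 * v := by linarith
    exact div_nonpos_of_nonpos_of_nonneg (neg_nonpos.mpr (by positivity)) this.le
  rcases le_or_gt ‖x‖ 1 with h | h
  · have : ‖x‖ * gaussPDF d v x ≤ 1 * (A * 1) := by
      unfold gaussPDF
      apply mul_le_mul h _ (by positivity) (by norm_num)
      exact mul_le_mul_of_nonneg_left hE hA0.le
    nlinarith
  · have key : ‖x‖ ^ 2 * Real.exp (-‖x‖ ^ 2 / (2 * v)) ≤ 2 * v := by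
      have h2v : (0:ℝ) < 2 * v := by linarith
      have := mul_exp_neg_div_le (t := ‖x‖ ^ 2) h2v (by positivity)
      have hexp1 : (1:ℝ) ≤ Real.exp 1 := by
        have := Real.add_one_le_exp (1:ℝ); linarith
      have hle : 2 * v / Real.exp 1 ≤ 2 * v := by
        apply div_le_self h2v.le hexp1
      calc ‖x‖ ^ 2 * Real.exp (-‖x‖ ^ 2 / (2 * v))
          = ‖x‖ ^ 2 * Real.exp (-(‖x‖ ^ 2 / (2 * v))) := by rw [neg_div]
        _ ≤ 2 * v / Real.exp 1 := this
        _ ≤ 2 * v := hle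
    have h1 : ‖x‖ * Real.exp (-‖x‖ ^ 2 / (2 * v)) ≤ 2 * v := by
      have hxx : ‖x‖ ≤ ‖x‖ ^ 2 := by nlinarith
      have hEpos : 0 < Real.exp (-‖x‖ ^ 2 / (2 * v)) := Real.exp_pos _
      nlinarith
    calc ‖x‖ * gaussPDF d v x = A * (‖x‖ * Real.exp (-‖x‖ ^ 2 / (2 * v))) := by
          unfold gaussPDF; ring
      _ ≤ A * (2 * v) := mul_le_mul_of_nonneg_left h1 hA0.le
      _ ≤ A * (1 + 2 * v) := by nlinarith


lemma hasFDerivAt_gaussPDF (hv : 0 < v) (y : Vec d) :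
    HasFDerivAt (gaussPDF d v)
      ((-v⁻¹ * gaussPDF d v y) • innerSL ℝ y) y := by
  set A : ℝ := (2 * Real.pi * v) ^ (-(d : ℝ) / 2) with hA
  have h1 : HasFDerivAt (fun x : Vec d => ‖x‖ ^ 2) (2 • innerSL ℝ y) y :=
    (hasStrictFDerivAt_norm_sq y).hasFDerivAt
  have h2 : HasFDerivAt (fun x : Vec d => (-(2 * v)⁻¹) * ‖x‖ ^ 2)
      ((-(2 * v)⁻¹) • (2 • innerSL ℝ y)) y := h1.const_mul _
  have h3 := h2.exp
  have h4 := h3.const_mul A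
  have hfun : (fun x : Vec d => A * Real.exp ((-(2 * v)⁻¹) * ‖x‖ ^ 2)) = gaussPDF d v := by
    funext x
    unfold gaussPDF
    rw [← hA]
    congr 1
    congr 1
    field_simp
  rw [hfun] at h4
  refine h4.congr_fderiv ?_
  ext w
  simp only [ContinuousLinearMap.smul_apply, ContinuousLinearMap.coe_smul', Pi.smul_apply,
    smul_eq_mul, innerSL_apply_apply]
  unfold gaussPDF
  rw [← hA]
  have : -‖y‖ ^ 2 / (2 * v) = (-(2*v)⁻¹) * ‖y‖ ^ 2 := by field_simp
  rw [this]
  ring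


section Conv

variable (μ : Measure (Vec d)) [IsProbabilityMeasure μ]

lemma meas_g (hv : 0 < v) (x : Vec d) :
    AEStronglyMeasurable (fun z : Vec d => gaussPDF d v (x - z)) μ :=
  ((continuous_gaussPDF hv).comp (continuous_const.sub continuous_id)).aestronglyMeasurable

lemma int_g (hv : 0 < v) (x : Vec d) :
    Integrable (fun z : Vec d => gaussPDF d v (x - z)) μ := by
  refine (integrable_const ((2 * Real.pi * v) ^ (-(d : ℝ) / 2))).mono' (meas_g μ hv x) ?_
  filter_upwards with z
  rw [Real.norm_of_nonneg (gaussPDF_nonneg hv _)]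
  exact gaussPDF_le hv _

lemma int_sq (hv : 0 < v) (hμ2 : Integrable (fun z : Vec d => ‖z‖ ^ 2) μ) (x : Vec d) :
    Integrable (fun z : Vec d => ‖x - z‖ ^ 2 * gaussPDF d v (x - z)) μ := by
  set A : ℝ := (2 * Real.pi * v) ^ (-(d : ℝ) / 2) with hA
  have hA0 : 0 < A := by rw [hA]; positivity
  have hdom : Integrable (fun z : Vec d => (2 * ‖x‖ ^ 2 + 2 * ‖z‖ ^ 2) * A) μ :=
    ((integrable_const (2 * ‖x‖ ^ 2)).add (hμ2.const_mul 2)).mul_const A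
  refine hdom.mono' ?_ ?_
  · exact (((continuous_const.sub continuous_id).norm.pow 2).mul
      ((continuous_gaussPDF hv).comp (continuous_const.sub continuous_id))).aestronglyMeasurable
  · filter_upwards with z
    have h1 : ‖x - z‖ ^ 2 ≤ 2 * ‖x‖ ^ 2 + 2 * ‖z‖ ^ 2 := by
      have h := pow_le_pow_left₀ (norm_nonneg (x - z)) (norm_sub_le x z) 2
      nlinarith [sq_nonneg (‖x‖ - ‖z‖)]
    rw [Real.norm_of_nonneg (mul_nonneg (by positivity) (gaussPDF_nonneg hv _))]
    exact mul_le_mul h1 (gaussPDF_le hv _) (gaussPDF_nonneg hv _) (by positivity)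

lemma int_norm_g (hv : 0 < v) (x : Vec d) :
    Integrable (fun z : Vec d => ‖x - z‖ * gaussPDF d v (x - z)) μ := by
  refine (integrable_const ((2 * Real.pi * v) ^ (-(d : ℝ) / 2) * (1 + 2 * v))).mono' ?_ ?_
  · exact (((continuous_const.sub continuous_id).norm).mul
      ((continuous_gaussPDF hv).comp (continuous_const.sub continuous_id))).aestronglyMeasurable
  · filter_upwards with z
    rw [Real.norm_of_nonneg (mul_nonneg (norm_nonneg _) (gaussPDF_nonneg hv _))]
    exact norm_mul_gaussPDF_le hv _

lemma int_W (hv : 0 < v) (x : Vec d) :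
    Integrable (fun z : Vec d => (v⁻¹ * gaussPDF d v (x - z)) • (z - x)) μ := by
  refine (integrable_const (v⁻¹ * ((2 * Real.pi * v) ^ (-(d : ℝ) / 2) * (1 + 2 * v)))).mono' ?_ ?_
  · apply Continuous.aestronglyMeasurable
    exact (continuous_const.mul
      ((continuous_gaussPDF hv).comp (continuous_const.sub continuous_id))).smul
      (continuous_id.sub continuous_const)
  · filter_upwards with z
    rw [norm_smul]
    have h1 : ‖v⁻¹ * gaussPDF d v (x - z)‖ = v⁻¹ * gaussPDF d v (x - z) := by
      rw [Real.norm_of_nonneg (mul_nonneg (inv_nonneg.mpr hv.le) (gaussPDF_nonneg hv _))]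
    rw [h1]
    have h2 : ‖z - x‖ = ‖x - z‖ := by rw [← neg_sub, norm_neg]
    rw [h2, mul_assoc]
    apply mul_le_mul_of_nonneg_left _ (inv_nonneg.mpr hv.le)
    rw [mul_comm]
    exact norm_mul_gaussPDF_le hv _

lemma p_pos (hv : 0 < v) (x : Vec d) :
    0 < ∫ z, gaussPDF d v (x - z) ∂μ := by
  rw [integral_pos_iff_support_of_nonneg (fun z => gaussPDF_nonneg hv _) (int_g μ hv x)]
  have : (Function.support fun z : Vec d => gaussPDF d v (x - z)) = Set.univ := by
    apply Set.eq_univ_of_forall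
    intro z
    exact (gaussPDF_pos hv _).ne'
  rw [this]
  simp

lemma int_F' (hv : 0 < v) (x : Vec d) :
    Integrable (fun z : Vec d =>
      (-v⁻¹ * gaussPDF d v (x - z)) • innerSL ℝ (x - z)) μ := by
  refine (integrable_const (v⁻¹ * ((2 * Real.pi * v) ^ (-(d : ℝ) / 2) * (1 + 2 * v)))).mono' ?_ ?_
  · apply Continuous.aestronglyMeasurable
    exact (continuous_const.mul
      ((continuous_gaussPDF hv).comp (continuous_const.sub continuous_id))).smul
      ((innerSL ℝ).continuous.comp (continuous_const.sub continuous_id))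
  · filter_upwards with z
    have hns : (-v⁻¹ * gaussPDF d v (x - z)) • (innerSL ℝ (x - z))
        = innerSL ℝ ((-v⁻¹ * gaussPDF d v (x - z)) • (x - z)) :=
      (map_smul (innerSL ℝ) _ _).symm
    rw [hns, innerSL_apply_norm, norm_smul]
    have h1 : ‖-v⁻¹ * gaussPDF d v (x - z)‖ = v⁻¹ * gaussPDF d v (x - z) := by
      rw [norm_mul, Real.norm_of_nonneg (gaussPDF_nonneg hv _), norm_neg,
        Real.norm_of_nonneg (by positivity)]
    rw [h1, mul_assoc]
    apply mul_le_mul_of_nonneg_left _ (by positivity)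
    rw [mul_comm]
    exact norm_mul_gaussPDF_le hv _

lemma hasGradientAt_logp (hv : 0 < v) (x : Vec d) :
    HasGradientAt (fun y : Vec d => Real.log (∫ z, gaussPDF d v (y - z) ∂μ))
      ((∫ z, gaussPDF d v (x - z) ∂μ)⁻¹ •
        ∫ z, (v⁻¹ * gaussPDF d v (x - z)) • (z - x) ∂μ) x := by
  set B : ℝ := v⁻¹ * ((2 * Real.pi * v) ^ (-(d : ℝ) / 2) * (1 + 2 * v)) with hB
  have hFD : HasFDerivAt (fun y : Vec d => ∫ z, gaussPDF d v (y - z) ∂μ)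
      (∫ z, (-v⁻¹ * gaussPDF d v (x - z)) • innerSL ℝ (x - z) ∂μ) x := by
    apply hasFDerivAt_integral_of_dominated_of_fderiv_le
      (F' := fun (y : Vec d) (z : Vec d) =>
        (-v⁻¹ * gaussPDF d v (y - z)) • innerSL ℝ (y - z))
      (bound := fun _ => B) (s := Metric.ball x 1) (Metric.ball_mem_nhds x one_pos)
    · filter_upwards with y using meas_g μ hv y
    · exact int_g μ hv x
    · exact (int_F' μ hv x).aestronglyMeasurable
    · filter_upwards with z
      intro y _
      have hns : (-v⁻¹ * gaussPDF d v (y - z)) • (innerSL ℝ (y - z))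
          = innerSL ℝ ((-v⁻¹ * gaussPDF d v (y - z)) • (y - z)) :=
        (map_smul (innerSL ℝ) _ _).symm
      rw [hns, innerSL_apply_norm, norm_smul]
      have h1 : ‖-v⁻¹ * gaussPDF d v (y - z)‖ = v⁻¹ * gaussPDF d v (y - z) := by
        rw [norm_mul, Real.norm_of_nonneg (gaussPDF_nonneg hv _), norm_neg,
          Real.norm_of_nonneg (by positivity)]
      rw [h1, mul_assoc, hB]
      apply mul_le_mul_of_nonneg_left _ (by positivity)
      rw [mul_comm]
      exact norm_mul_gaussPDF_le hv _
    · exact integrable_const B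
    · filter_upwards with z
      intro y _
      have h := (hasFDerivAt_gaussPDF hv (y - z)).comp y ((hasFDerivAt_id y).sub_const z)
      simpa [Function.comp_def] using h
  have hEq : (∫ z, (-v⁻¹ * gaussPDF d v (x - z)) • innerSL ℝ (x - z) ∂μ) =
      (InnerProductSpace.toDual ℝ (Vec d))
        (∫ z, (v⁻¹ * gaussPDF d v (x - z)) • (z - x) ∂μ) := by
    apply ContinuousLinearMap.ext
    intro u
    rw [ContinuousLinearMap.integral_apply (int_F' μ hv x)]
    rw [InnerProductSpace.toDual_apply_apply, real_inner_comm,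
      ← integral_inner (int_W μ hv x)]
    congr 1
    funext z
    simp only [ContinuousLinearMap.smul_apply, innerSL_apply_apply, smul_eq_mul,
      real_inner_smul_right]
    have h2 : (inner ℝ u (z - x) : ℝ) = -(inner ℝ (x - z) u : ℝ) := by
      rw [real_inner_comm, ← inner_neg_left, neg_sub]
    rw [h2]
    ring
  have hlog := hFD.log (p_pos μ hv x).ne'
  rw [hasGradientAt_iff_hasFDerivAt, _root_.map_smul, ← hEq]
  exact hlog


lemma I1_sq_le (hv : 0 < v) (hμ2 : Integrable (fun z : Vec d => ‖z‖ ^ 2) μ) (x : Vec d) :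
    (∫ z, ‖x - z‖ * gaussPDF d v (x - z) ∂μ) ^ 2 ≤
      (∫ z, gaussPDF d v (x - z) ∂μ) * ∫ z, ‖x - z‖ ^ 2 * gaussPDF d v (x - z) ∂μ := by
  set a : Vec d → ℝ := fun z => Real.sqrt (gaussPDF d v (x - z)) with ha
  set b : Vec d → ℝ := fun z => ‖x - z‖ * a z with hb
  have ha_meas : AEStronglyMeasurable a μ :=
    (((continuous_gaussPDF hv).comp (continuous_const.sub continuous_id)).sqrt).aestronglyMeasurable
  have hb_meas : AEStronglyMeasurable b μ :=
    (((continuous_const.sub continuous_id).norm).mul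
      (((continuous_gaussPDF hv).comp (continuous_const.sub continuous_id)).sqrt)).aestronglyMeasurable
  have ha2 : (fun z => a z ^ 2) = fun z : Vec d => gaussPDF d v (x - z) := by
    funext z; exact Real.sq_sqrt (gaussPDF_nonneg hv _)
  have hb2 : (fun z => b z ^ 2) = fun z : Vec d => ‖x - z‖ ^ 2 * gaussPDF d v (x - z) := by
    funext z
    rw [hb]
    simp only [mul_pow]
    rw [Real.sq_sqrt (gaussPDF_nonneg hv _)]
  have hMa : MemLp a (ENNReal.ofReal 2) μ := by
    rw [show ENNReal.ofReal 2 = 2 by norm_num]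
    rw [memLp_two_iff_integrable_sq ha_meas, ha2]
    exact int_g μ hv x
  have hMb : MemLp b (ENNReal.ofReal 2) μ := by
    rw [show ENNReal.ofReal 2 = 2 by norm_num]
    rw [memLp_two_iff_integrable_sq hb_meas, hb2]
    exact int_sq μ hv hμ2 x
  have hpq : Real.HolderConjugate 2 2 := Real.HolderConjugate.two_two
  have hCS := integral_mul_le_Lp_mul_Lq_of_nonneg hpq
    (Filter.Eventually.of_forall fun z => Real.sqrt_nonneg _)
    (Filter.Eventually.of_forall fun z => mul_nonneg (norm_nonneg _) (Real.sqrt_nonneg _))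
    hMa hMb
  have hab : (fun z => a z * b z) = fun z : Vec d => ‖x - z‖ * gaussPDF d v (x - z) := by
    funext z
    rw [hb, ha]
    rw [show Real.sqrt (gaussPDF d v (x - z)) * (‖x - z‖ * Real.sqrt (gaussPDF d v (x - z)))
      = ‖x - z‖ * (Real.sqrt (gaussPDF d v (x - z)) * Real.sqrt (gaussPDF d v (x - z))) by ring]
    rw [Real.mul_self_sqrt (gaussPDF_nonneg hv _)]
  have hr2 : ∀ y : ℝ, y ^ (2:ℝ) = y ^ 2 := fun y => Real.rpow_two y
  simp only [hr2] at hCS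
  rw [ha2, hb2] at hCS
  have hCS2 : ∫ z, ‖x - z‖ * gaussPDF d v (x - z) ∂μ ≤
      (∫ z, gaussPDF d v (x - z) ∂μ) ^ ((1:ℝ)/2) *
      (∫ z, ‖x - z‖ ^ 2 * gaussPDF d v (x - z) ∂μ) ^ ((1:ℝ)/2) := by
    calc ∫ z, ‖x - z‖ * gaussPDF d v (x - z) ∂μ = ∫ z, a z * b z ∂μ := by rw [hab]
      _ ≤ _ := hCS
  have hpnn : 0 ≤ ∫ z, gaussPDF d v (x - z) ∂μ := (p_pos μ hv x).le
  have hInn : 0 ≤ ∫ z, ‖x - z‖ ^ 2 * gaussPDF d v (x - z) ∂μ :=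
    integral_nonneg fun z => mul_nonneg (by positivity) (gaussPDF_nonneg hv _)
  have hI1nn : 0 ≤ ∫ z, ‖x - z‖ * gaussPDF d v (x - z) ∂μ :=
    integral_nonneg fun z => mul_nonneg (norm_nonneg _) (gaussPDF_nonneg hv _)
  have := pow_le_pow_left₀ hI1nn hCS2 2
  calc (∫ z, ‖x - z‖ * gaussPDF d v (x - z) ∂μ) ^ 2
      ≤ ((∫ z, gaussPDF d v (x - z) ∂μ) ^ ((1:ℝ)/2) *
        (∫ z, ‖x - z‖ ^ 2 * gaussPDF d v (x - z) ∂μ) ^ ((1:ℝ)/2)) ^ 2 := this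
    _ = _ := by
        rw [mul_pow, ← Real.sqrt_eq_rpow, ← Real.sqrt_eq_rpow,
          Real.sq_sqrt hpnn, Real.sq_sqrt hInn]

lemma key_pointwise (hv : 0 < v) (hμ2 : Integrable (fun z : Vec d => ‖z‖ ^ 2) μ) (x : Vec d) :
    ‖gradient (fun y : Vec d => Real.log (∫ z, gaussPDF d v (y - z) ∂μ)) x‖ ^ 2 *
      (∫ z, gaussPDF d v (x - z) ∂μ) ≤
    v⁻¹ * v⁻¹ * ∫ z, ‖x - z‖ ^ 2 * gaussPDF d v (x - z) ∂μ := by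
  have hgrad := (hasGradientAt_logp μ hv x).gradient
  rw [hgrad]
  set p := ∫ z, gaussPDF d v (x - z) ∂μ with hpdef
  set w := ∫ z, (v⁻¹ * gaussPDF d v (x - z)) • (z - x) ∂μ with hwdef
  set I1 := ∫ z, ‖x - z‖ * gaussPDF d v (x - z) ∂μ with hI1def
  set I2 := ∫ z, ‖x - z‖ ^ 2 * gaussPDF d v (x - z) ∂μ with hI2def
  have hp : 0 < p := p_pos μ hv x
  have hI1nn : 0 ≤ I1 :=
    integral_nonneg fun z => mul_nonneg (norm_nonneg _) (gaussPDF_nonneg hv _)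
  have hI2nn : 0 ≤ I2 :=
    integral_nonneg fun z => mul_nonneg (by positivity) (gaussPDF_nonneg hv _)
  have hwle : ‖w‖ ≤ v⁻¹ * I1 := by
    calc ‖w‖ ≤ ∫ z, ‖(v⁻¹ * gaussPDF d v (x - z)) • (z - x)‖ ∂μ :=
          norm_integral_le_integral_norm _
      _ = ∫ z, v⁻¹ * (‖x - z‖ * gaussPDF d v (x - z)) ∂μ := by
          congr 1
          funext z
          rw [norm_smul, Real.norm_of_nonneg (mul_nonneg (inv_nonneg.mpr hv.le)
            (gaussPDF_nonneg hv _)), show ‖z - x‖ = ‖x - z‖ by rw [← neg_sub, norm_neg]]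
          ring
      _ = v⁻¹ * I1 := by rw [integral_const_mul]
  have hCS : I1 ^ 2 ≤ p * I2 := I1_sq_le μ hv hμ2 x
  have h2 : ‖w‖ ^ 2 ≤ v⁻¹ * v⁻¹ * (p * I2) := by
    have hsq := pow_le_pow_left₀ (norm_nonneg w) hwle 2
    calc ‖w‖ ^ 2 ≤ (v⁻¹ * I1) ^ 2 := hsq
      _ = v⁻¹ * v⁻¹ * I1 ^ 2 := by ring
      _ ≤ v⁻¹ * v⁻¹ * (p * I2) := by
          apply mul_le_mul_of_nonneg_left hCS (by positivity)
  have hns : ‖p⁻¹ • w‖ = p⁻¹ * ‖w‖ := by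
    rw [norm_smul, Real.norm_of_nonneg (inv_nonneg.mpr hp.le)]
  rw [hns]
  have e1 : (p⁻¹ * ‖w‖) ^ 2 * p = ‖w‖ ^ 2 * (p⁻¹ ^ 2 * p) := by ring
  have e2 : p⁻¹ ^ 2 * p = p⁻¹ := by field_simp
  rw [e1, e2]
  calc ‖w‖ ^ 2 * p⁻¹ ≤ (v⁻¹ * v⁻¹ * (p * I2)) * p⁻¹ :=
        mul_le_mul_of_nonneg_right h2 (inv_nonneg.mpr hp.le)
    _ = v⁻¹ * v⁻¹ * I2 * (p * p⁻¹) := by ring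
    _ = v⁻¹ * v⁻¹ * I2 := by rw [mul_inv_cancel₀ hp.ne']; ring

end Conv

section SecondMoment

lemma second_moment_gauss (hv : 0 < v) :
    ∃ D : Vec d → ℝ, (∀ x, 0 ≤ D x) ∧ (∀ x, ‖x‖ ^ 2 * gaussPDF d v x ≤ D x) ∧
      Integrable D (volume : Measure (Vec d)) ∧ ∫ x, D x ≤ 3 * d * v := by
  classical
  set A : ℝ := (2 * Real.pi * v) ^ (-(d : ℝ) / 2) with hA
  have hA0 : 0 < A := by rw [hA]; positivity
  set K : ℝ := A * (4 * v / Real.exp 1) with hK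
  have hK0 : 0 < K := by rw [hK]; positivity
  set f : Fin d → Fin d → ℝ → ℝ := fun i j t =>
    if j = i then Real.exp (-((4 * v)⁻¹ * t ^ 2)) else Real.exp (-((2 * v)⁻¹ * t ^ 2)) with hf
  refine ⟨fun x => K * ∑ i, ∏ j, f i j (x j), ?_, ?_, ?_, ?_⟩
  · intro x
    apply mul_nonneg hK0.le
    apply Finset.sum_nonneg
    intro i _
    apply Finset.prod_nonneg
    intro j _
    rw [hf]
    dsimp only
    split <;> positivity
  · intro x
    have hnorm : ‖x‖ ^ 2 = ∑ i, (x i) ^ 2 := by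
      rw [EuclideanSpace.norm_eq, Real.sq_sqrt (Finset.sum_nonneg fun i _ => by positivity)]
      congr 1; funext i; rw [Real.norm_eq_abs, sq_abs]
    have hexp : Real.exp (-‖x‖ ^ 2 / (2 * v)) = ∏ j, Real.exp (-((2 * v)⁻¹ * (x j) ^ 2)) := by
      rw [← Real.exp_sum]
      congr 1
      rw [hnorm, neg_div, Finset.sum_div, ← Finset.sum_neg_distrib]
      exact Finset.sum_congr rfl fun j _ => by rw [div_eq_inv_mul]
    have key : ∀ i : Fin d, (x i) ^ 2 * ∏ j, Real.exp (-((2 * v)⁻¹ * (x j) ^ 2))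
        ≤ (4 * v / Real.exp 1) * ∏ j, f i j (x j) := by
      intro i
      have hsplit : (∏ j, Real.exp (-((2 * v)⁻¹ * (x j) ^ 2)))
          = Real.exp (-((2 * v)⁻¹ * (x i) ^ 2)) *
            ∏ j ∈ Finset.univ.erase i, Real.exp (-((2 * v)⁻¹ * (x j) ^ 2)) :=
        (Finset.mul_prod_erase Finset.univ _ (Finset.mem_univ i)).symm
      have hsplit2 : (∏ j, f i j (x j))
          = Real.exp (-((4 * v)⁻¹ * (x i) ^ 2)) *
            ∏ j ∈ Finset.univ.erase i, Real.exp (-((2 * v)⁻¹ * (x j) ^ 2)) := by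
        rw [← Finset.mul_prod_erase Finset.univ _ (Finset.mem_univ i)]
        congr 1
        · rw [hf]; simp
        · apply Finset.prod_congr rfl
          intro j hj
          rw [hf]; simp [Finset.ne_of_mem_erase hj]
      have hscalar : (x i) ^ 2 * Real.exp (-((2 * v)⁻¹ * (x i) ^ 2))
          ≤ (4 * v / Real.exp 1) * Real.exp (-((4 * v)⁻¹ * (x i) ^ 2)) := by
        have hEsplit : Real.exp (-((2 * v)⁻¹ * (x i) ^ 2))
            = Real.exp (-((x i) ^ 2 / (4 * v))) * Real.exp (-((4 * v)⁻¹ * (x i) ^ 2)) := by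
          rw [← Real.exp_add]
          congr 1
          field_simp
          ring
        rw [hEsplit, ← mul_assoc]
        apply mul_le_mul_of_nonneg_right _ (Real.exp_pos _).le
        exact mul_exp_neg_div_le (by positivity) (by positivity)
      rw [hsplit, hsplit2, ← mul_assoc, ← mul_assoc]
      apply mul_le_mul_of_nonneg_right hscalar
      exact Finset.prod_nonneg fun j _ => (Real.exp_pos _).le
    calc ‖x‖ ^ 2 * gaussPDF d v x
        = A * ∑ i, ((x i) ^ 2 * ∏ j, Real.exp (-((2 * v)⁻¹ * (x j) ^ 2))) := by
          unfold gaussPDF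
          rw [← hA, hexp, hnorm, Finset.sum_mul, Finset.mul_sum]
          exact Finset.sum_congr rfl fun i _ => by ring
      _ ≤ A * ∑ i, ((4 * v / Real.exp 1) * ∏ j, f i j (x j)) := by
          apply mul_le_mul_of_nonneg_left _ hA0.le
          exact Finset.sum_le_sum fun i _ => key i
      _ = K * ∑ i, ∏ j, f i j (x j) := by
          rw [hK, Finset.mul_sum, Finset.mul_sum]
          exact Finset.sum_congr rfl fun i _ => by ring
  · have hPint : ∀ i : Fin d, Integrable (fun x : Vec d => ∏ j, f i j (x j)) volume := by
      intro i
      have e := EuclideanSpace.volume_preserving_symm_measurableEquiv_toLp (Fin d)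
      rw [← MeasurePreserving.integrable_comp_emb e.symm (MeasurableEquiv.measurableEmbedding _)]
      have hcomp : (fun x : Vec d => ∏ j, f i j (x j)) ∘
          (MeasurableEquiv.toLp 2 (Fin d → ℝ)).symm.symm
          = fun y : Fin d → ℝ => ∏ j, f i j (y j) := by
        funext y
        rfl
      rw [hcomp]
      apply Integrable.fintype_prod (f := fun j (t : ℝ) => f i j t)
      intro j
      rw [hf]; dsimp only
      by_cases hji : j = i
      · simp only [if_pos hji]
        simpa [neg_mul] using integrable_exp_neg_mul_sq (show 0 < (4*v)⁻¹ by positivity)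
      · simp only [if_neg hji]
        simpa [neg_mul] using integrable_exp_neg_mul_sq (show 0 < (2*v)⁻¹ by positivity)
    exact (integrable_finset_sum _ (fun i _ => hPint i)).const_mul K
  · have e := EuclideanSpace.volume_preserving_symm_measurableEquiv_toLp (Fin d)
    have hPint : ∀ i : Fin d, Integrable (fun x : Vec d => ∏ j, f i j (x j)) volume := by
      intro i
      rw [← MeasurePreserving.integrable_comp_emb e.symm (MeasurableEquiv.measurableEmbedding _)]
      have hcomp : (fun x : Vec d => ∏ j, f i j (x j)) ∘
          (MeasurableEquiv.toLp 2 (Fin d → ℝ)).symm.symm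
          = fun y : Fin d → ℝ => ∏ j, f i j (y j) := by
        funext y
        rfl
      rw [hcomp]
      apply Integrable.fintype_prod (f := fun j (t : ℝ) => f i j t)
      intro j
      rw [hf]; dsimp only
      by_cases hji : j = i
      · simp only [if_pos hji]
        simpa [neg_mul] using integrable_exp_neg_mul_sq (show 0 < (4*v)⁻¹ by positivity)
      · simp only [if_neg hji]
        simpa [neg_mul] using integrable_exp_neg_mul_sq (show 0 < (2*v)⁻¹ by positivity)
    have hPval : ∀ i : Fin d, (∫ x : Vec d, ∏ j, f i j (x j)) =
        Real.sqrt (π * (4*v)) * Real.sqrt (π * (2*v)) ^ (d - 1) := by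
      intro i
      have hcomp : (fun x : Vec d => ∏ j, f i j (x j)) ∘
          (MeasurableEquiv.toLp 2 (Fin d → ℝ)).symm.symm
          = fun y : Fin d → ℝ => ∏ j, f i j (y j) := by
        funext y
        rfl
      have hIC := MeasurePreserving.integral_comp e.symm
        (MeasurableEquiv.measurableEmbedding (MeasurableEquiv.toLp 2 (Fin d → ℝ)).symm.symm)
        (fun x : Vec d => ∏ j, f i j (x j))
      rw [← hIC]
      have hstep : ∫ y : Fin d → ℝ, ∏ j, f i j (y j) =
          ∏ j, ∫ t : ℝ, f i j t := integral_fintype_prod_eq_prod (fun j t => f i j t)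
      have hco : (∫ x : Fin d → ℝ, ∏ j, f i j ((MeasurableEquiv.toLp 2 (Fin d → ℝ)).symm.symm x j))
          = ∫ y : Fin d → ℝ, ∏ j, f i j (y j) := rfl
      rw [hco, hstep]
      have hint : ∀ j : Fin d, (∫ t : ℝ, f i j t) =
          if j = i then Real.sqrt (π * (4*v)) else Real.sqrt (π * (2*v)) := by
        intro j
        rw [hf]; dsimp only
        by_cases hji : j = i
        · simp only [if_pos hji]
          have hig := integral_gaussian (4*v)⁻¹
          rw [show π / (4*v)⁻¹ = π * (4*v) by field_simp] at hig
          calc (∫ t : ℝ, Real.exp (-((4*v)⁻¹ * t ^ 2)))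
              = ∫ t : ℝ, Real.exp (-(4*v)⁻¹ * t ^ 2) := by
                congr 1; funext t; rw [neg_mul]
            _ = Real.sqrt (π * (4*v)) := hig
        · simp only [if_neg hji]
          have hig := integral_gaussian (2*v)⁻¹
          rw [show π / (2*v)⁻¹ = π * (2*v) by field_simp] at hig
          calc (∫ t : ℝ, Real.exp (-((2*v)⁻¹ * t ^ 2)))
              = ∫ t : ℝ, Real.exp (-(2*v)⁻¹ * t ^ 2) := by
                congr 1; funext t; rw [neg_mul]
            _ = Real.sqrt (π * (2*v)) := hig
      rw [Finset.prod_congr rfl (fun j _ => hint j)]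
      rw [← Finset.mul_prod_erase Finset.univ _ (Finset.mem_univ i), if_pos rfl]
      congr 1
      rw [Finset.prod_congr rfl (fun j hj => if_neg (Finset.ne_of_mem_erase hj)),
        Finset.prod_const, Finset.card_erase_of_mem (Finset.mem_univ i),
        Finset.card_univ, Fintype.card_fin]
    show (∫ x : Vec d, K * ∑ i, ∏ j, f i j (x j)) ≤ 3 * (d:ℝ) * v
    rw [MeasureTheory.integral_const_mul, integral_finset_sum _ (fun i _ => hPint i),
      Finset.sum_congr rfl (fun i _ => hPval i), Finset.sum_const,
      Finset.card_univ, Fintype.card_fin, nsmul_eq_mul]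
    rcases Nat.eq_zero_or_pos d with hd | hd
    · subst hd; simp
    · have h2πv : (0:ℝ) < 2 * π * v := by positivity
      set s : ℝ := Real.sqrt (π * (2*v)) with hs
      have hs0 : 0 < s := Real.sqrt_pos.mpr (by positivity)
      have h4 : Real.sqrt (π * (4*v)) = Real.sqrt 2 * s := by
        rw [hs, show π * (4*v) = 2 * (π * (2*v)) by ring,
          Real.sqrt_mul (by norm_num : (0:ℝ) ≤ 2)]
      have hss : s * s ^ (d - 1) = s ^ d := by
        rw [← pow_succ']
        congr 1
        omega
      have hsd : s ^ d = (2*π*v) ^ ((d:ℝ)/2) := by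
        rw [hs, show π * (2*v) = 2*π*v by ring, Real.sqrt_eq_rpow,
          ← Real.rpow_natCast ((2*π*v) ^ ((1:ℝ)/2)) d, ← Real.rpow_mul h2πv.le]
        congr 1
        push_cast
        ring
      have hAs : A * s ^ d = 1 := by
        rw [hA, hsd, ← Real.rpow_add h2πv, show -(d:ℝ)/2 + (d:ℝ)/2 = 0 by ring, Real.rpow_zero]
      have h42 : 4 * Real.sqrt 2 ≤ 3 * Real.exp 1 := by
        nlinarith [Real.mul_self_sqrt (show (0:ℝ) ≤ 2 by norm_num), Real.sqrt_nonneg 2,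
          Real.exp_one_gt_d9]
      have hd1 : (1:ℝ) ≤ (d:ℝ) := by exact_mod_cast hd
      calc K * ((d:ℝ) * (Real.sqrt (π * (4*v)) * s ^ (d-1)))
          = (4 * v / Real.exp 1) * Real.sqrt 2 * (d:ℝ) * (A * (s * s ^ (d-1))) := by
            rw [hK, h4]; ring
        _ = (4 * v / Real.exp 1) * Real.sqrt 2 * (d:ℝ) := by
            rw [hss, hAs, mul_one]
        _ ≤ 3 * (d:ℝ) * v := by
            rw [div_mul_eq_mul_div, div_mul_eq_mul_div, div_le_iff₀ (Real.exp_pos 1)]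
            nlinarith [mul_nonneg (mul_nonneg (sub_nonneg.mpr h42)
              (le_trans zero_le_one hd1)) hv.le, Real.sqrt_nonneg 2, Real.exp_pos 1]

end SecondMoment

end Statement12Aux

section Chain

variable (μ : Measure (Vec d)) [IsProbabilityMeasure μ]

lemma lintegral_prod_gauss (hv : 0 < v) [IsProbabilityMeasure (gaussMeasure d v)]
    (f : Vec d → ℝ≥0∞) (hf : Measurable f) :
    ∫⁻ y : Vec d × Vec d, f (y.1 + y.2) ∂(μ.prod (gaussMeasure d v)) =
      ∫⁻ x, f x * (∫⁻ z, ENNReal.ofReal (gaussPDF d v (x - z)) ∂μ) := by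
  have hfm2 : AEMeasurable (fun y : Vec d × Vec d => f (y.1 + y.2)) (μ.prod (gaussMeasure d v)) := by
    exact (hf.comp (measurable_fst.add measurable_snd)).aemeasurable
  rw [lintegral_prod _ hfm2]
  have h1 : ∀ z : Vec d, (∫⁻ e, f (z + e) ∂(gaussMeasure d v)) =
      ∫⁻ x, ENNReal.ofReal (gaussPDF d v (x - z)) * f x := by
    intro z
    have hfz : Measurable (fun e : Vec d => f (z + e)) := by
      exact hf.comp (measurable_const.add measurable_id)
    have hdens : Measurable (fun x : Vec d => ENNReal.ofReal (gaussPDF d v x)) := by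
      exact ENNReal.measurable_ofReal.comp (continuous_gaussPDF hv).measurable
    rw [gaussMeasure, lintegral_withDensity_eq_lintegral_mul _ hdens hfz]
    have ht := lintegral_add_right_eq_self (μ := (volume : Measure (Vec d)))
      (fun e => ENNReal.ofReal (gaussPDF d v e) * f (z + e)) (-z)
    calc ∫⁻ e, (fun e => ENNReal.ofReal (gaussPDF d v e) * f (z + e)) e
        = ∫⁻ x, (fun e => ENNReal.ofReal (gaussPDF d v e) * f (z + e)) (x + -z) := ht.symm
      _ = ∫⁻ x, ENNReal.ofReal (gaussPDF d v (x - z)) * f x := by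
          apply lintegral_congr
          intro x
          show ENNReal.ofReal (gaussPDF d v (x + -z)) * f (z + (x + -z)) = _
          rw [← sub_eq_add_neg, add_sub_cancel]
  rw [lintegral_congr h1]
  rw [lintegral_lintegral_swap]
  · apply lintegral_congr
    intro x
    have hgxm : Measurable (fun z : Vec d => ENNReal.ofReal (gaussPDF d v (x - z))) := by
      exact ENNReal.measurable_ofReal.comp
        ((continuous_gaussPDF hv).measurable.comp (measurable_const.sub measurable_id))
    rw [lintegral_mul_const _ hgxm, mul_comm]
  · apply Measurable.aemeasurable
    exact ((ENNReal.continuous_ofReal.comp ((continuous_gaussPDF hv).comp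
      (continuous_snd.sub continuous_fst))).measurable.mul (hf.comp measurable_snd))

lemma big_bound (hv : 0 < v) [IsProbabilityMeasure (gaussMeasure d v)]
    (hμ2 : Integrable (fun z : Vec d => ‖z‖ ^ 2) μ) :
    ∫⁻ y : Vec d × Vec d, ENNReal.ofReal
        (‖gradient (fun y : Vec d => Real.log (∫ z, gaussPDF d v (y - z) ∂μ)) (y.1 + y.2)‖ ^ 2)
        ∂(μ.prod (gaussMeasure d v)) ≤
      ENNReal.ofReal (v⁻¹ * v⁻¹ * (3 * d * v)) := by
  have hGm : Measurable (fun x : Vec d =>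
      gradient (fun y : Vec d => Real.log (∫ z, gaussPDF d v (y - z) ∂μ)) x) := by
    have h1 : Measurable (fderiv ℝ (fun y : Vec d => Real.log (∫ z, gaussPDF d v (y - z) ∂μ))) :=
      measurable_fderiv ℝ _
    exact ((InnerProductSpace.toDual ℝ (Vec d)).symm.continuous.measurable).comp h1
  have hFm : Measurable (fun x : Vec d => ENNReal.ofReal
      (‖gradient (fun y : Vec d => Real.log (∫ z, gaussPDF d v (y - z) ∂μ)) x‖ ^ 2)) :=
    ENNReal.measurable_ofReal.comp ((hGm.norm).pow_const 2)
  rw [lintegral_prod_gauss μ hv (fun x : Vec d => ENNReal.ofReal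
    (‖gradient (fun y : Vec d => Real.log (∫ z, gaussPDF d v (y - z) ∂μ)) x‖ ^ 2)) hFm]
  have hsecond : (∫⁻ x : Vec d, ENNReal.ofReal (∫ z, ‖x - z‖ ^ 2 * gaussPDF d v (x - z) ∂μ)) ≤
      ENNReal.ofReal (3 * d * v) := by
    have hpt : ∀ x : Vec d, ENNReal.ofReal (∫ z, ‖x - z‖ ^ 2 * gaussPDF d v (x - z) ∂μ) =
        ∫⁻ z, ENNReal.ofReal (‖x - z‖ ^ 2 * gaussPDF d v (x - z)) ∂μ := fun x =>
      ofReal_integral_eq_lintegral_ofReal (int_sq μ hv hμ2 x)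
        (Filter.Eventually.of_forall fun z =>
          mul_nonneg (by positivity) (gaussPDF_nonneg hv _))
    rw [lintegral_congr hpt, lintegral_lintegral_swap]
    · have htrans : ∀ z : Vec d,
          (∫⁻ x, ENNReal.ofReal (‖x - z‖ ^ 2 * gaussPDF d v (x - z))) =
          ∫⁻ u, ENNReal.ofReal (‖u‖ ^ 2 * gaussPDF d v u) := by
        intro z
        have ht := lintegral_add_right_eq_self (μ := (volume : Measure (Vec d)))
          (fun u => ENNReal.ofReal (‖u‖ ^ 2 * gaussPDF d v u)) (-z)
        calc (∫⁻ x, ENNReal.ofReal (‖x - z‖ ^ 2 * gaussPDF d v (x - z)))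
            = ∫⁻ x, (fun u => ENNReal.ofReal (‖u‖ ^ 2 * gaussPDF d v u)) (x + -z) := by
              apply lintegral_congr
              intro x
              rw [sub_eq_add_neg]
          _ = ∫⁻ u, ENNReal.ofReal (‖u‖ ^ 2 * gaussPDF d v u) := ht
      rw [lintegral_congr htrans, lintegral_const, measure_univ, mul_one]
      obtain ⟨D, hD0, hDle, hDint, hDval⟩ := second_moment_gauss (d := d) hv
      calc (∫⁻ u : Vec d, ENNReal.ofReal (‖u‖ ^ 2 * gaussPDF d v u))
          ≤ ∫⁻ u, ENNReal.ofReal (D u) :=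
            lintegral_mono fun u => ENNReal.ofReal_le_ofReal (hDle u)
        _ = ENNReal.ofReal (∫ u, D u) :=
            (ofReal_integral_eq_lintegral_ofReal hDint (Filter.Eventually.of_forall hD0)).symm
        _ ≤ ENNReal.ofReal (3 * d * v) := ENNReal.ofReal_le_ofReal hDval
    · apply Measurable.aemeasurable
      exact (ENNReal.continuous_ofReal.comp
        (((continuous_fst.sub continuous_snd).norm.pow 2).mul
          ((continuous_gaussPDF hv).comp (continuous_fst.sub continuous_snd)))).measurable
  calc (∫⁻ x, ENNReal.ofReal
        (‖gradient (fun y : Vec d => Real.log (∫ z, gaussPDF d v (y - z) ∂μ)) x‖ ^ 2) *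
        (∫⁻ z, ENNReal.ofReal (gaussPDF d v (x - z)) ∂μ))
      = ∫⁻ x, ENNReal.ofReal
          (‖gradient (fun y : Vec d => Real.log (∫ z, gaussPDF d v (y - z) ∂μ)) x‖ ^ 2 *
          (∫ z, gaussPDF d v (x - z) ∂μ)) := by
        apply lintegral_congr
        intro x
        rw [← ofReal_integral_eq_lintegral_ofReal (int_g μ hv x)
          (Filter.Eventually.of_forall fun z => gaussPDF_nonneg hv _),
          ← ENNReal.ofReal_mul (by positivity)]
    _ ≤ ∫⁻ x, ENNReal.ofReal (v⁻¹ * v⁻¹ * ∫ z, ‖x - z‖ ^ 2 * gaussPDF d v (x - z) ∂μ) :=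
        lintegral_mono fun x => ENNReal.ofReal_le_ofReal (key_pointwise μ hv hμ2 x)
    _ = ENNReal.ofReal (v⁻¹ * v⁻¹) *
        ∫⁻ x, ENNReal.ofReal (∫ z, ‖x - z‖ ^ 2 * gaussPDF d v (x - z) ∂μ) := by
        rw [← lintegral_const_mul' _ _ ENNReal.ofReal_ne_top]
        apply lintegral_congr
        intro x
        rw [← ENNReal.ofReal_mul (by positivity)]
    _ ≤ ENNReal.ofReal (v⁻¹ * v⁻¹) * ENNReal.ofReal (3 * d * v) := by
        exact mul_le_mul_right hsecond _
    _ = ENNReal.ofReal (v⁻¹ * v⁻¹ * (3 * d * v)) :=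
        (ENNReal.ofReal_mul (by positivity)).symm

end Chain

/-- If `X = Z + ε₀` with `E[‖Z‖²] ≤ R²` and `ε₀ ~ N(0,τ²I_d)` independent
of `Z`, then `E[‖∇log p_X(X)‖²] ≤ 3(2R² + dτ²)/τ⁴`. -/
theorem statement12
    {Ω : Type*} [MeasurableSpace Ω] (P : Measure Ω) [IsProbabilityMeasure P]
    {d : ℕ} (Z ε₀ X : Ω → Vec d) (hZm : Measurable Z) (hε₀m : Measurable ε₀)
    (τ : ℝ) (hτ : 0 < τ)
    (hε₀law : P.map ε₀ = gaussMeasure d (τ ^ 2))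
    (hindep : IndepFun Z ε₀ P)
    (R : ℝ)
    (hZ2int : Integrable (fun ω => ‖Z ω‖ ^ 2) P)
    (hZ2 : ∫ ω, ‖Z ω‖ ^ 2 ∂P ≤ R ^ 2)
    (hX : X = Z + ε₀)
    (pX : Vec d → ℝ) (hpX : pX = fun x => noisyDensity d (P.map Z) (τ ^ 2) x) :
    ∫ ω, ‖gradient (fun x => Real.log (pX x)) (X ω)‖ ^ 2 ∂P ≤
      3 * (2 * R ^ 2 + (d : ℝ) * τ ^ 2) / τ ^ 4 := by
  subst hpX hX
  set v : ℝ := τ ^ 2 with hvdef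
  have hv : 0 < v := by positivity
  set μ : Measure (Vec d) := P.map Z with hμdef
  haveI : IsProbabilityMeasure μ := Measure.isProbabilityMeasure_map hZm.aemeasurable
  haveI hPgauss : IsProbabilityMeasure (gaussMeasure d v) := by
    rw [← hε₀law]; exact Measure.isProbabilityMeasure_map hε₀m.aemeasurable
  have hμ2 : Integrable (fun z : Vec d => ‖z‖ ^ 2) μ := by
    rw [hμdef]
    refine (integrable_map_measure ?_ hZm.aemeasurable).mpr hZ2int
    exact (continuous_norm.pow 2).aestronglyMeasurable
  have hR2 : (0:ℝ) ≤ R ^ 2 := le_trans (integral_nonneg fun ω => by positivity) hZ2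
  have hGm : Measurable (fun x : Vec d =>
      gradient (fun y : Vec d => Real.log (∫ z, gaussPDF d v (y - z) ∂μ)) x) := by
    have h1 : Measurable (fderiv ℝ (fun y : Vec d => Real.log (∫ z, gaussPDF d v (y - z) ∂μ))) :=
      measurable_fderiv ℝ _
    exact ((InnerProductSpace.toDual ℝ (Vec d)).symm.continuous.measurable).comp h1
  have hFm : Measurable (fun x : Vec d => ENNReal.ofReal
      (‖gradient (fun y : Vec d => Real.log (∫ z, gaussPDF d v (y - z) ∂μ)) x‖ ^ 2)) :=
    ENNReal.measurable_ofReal.comp ((hGm.norm).pow_const 2)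
  have hgoalfun : (fun x : Vec d => Real.log ((fun x => noisyDensity d μ v x) x)) =
      fun y : Vec d => Real.log (∫ z, gaussPDF d v (y - z) ∂μ) := rfl
  rw [hgoalfun]
  have hSm : Measurable (Z + ε₀) := hZm.add hε₀m
  have hfmeas : Measurable fun ω =>
      ‖gradient (fun y : Vec d => Real.log (∫ z, gaussPDF d v (y - z) ∂μ)) ((Z + ε₀) ω)‖ ^ 2 :=
    ((hGm.comp hSm).norm).pow_const 2
  rw [integral_eq_lintegral_of_nonneg_ae
    (Filter.Eventually.of_forall fun ω => by positivity) hfmeas.aestronglyMeasurable]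
  apply ENNReal.toReal_le_of_le_ofReal (by positivity)
  have hjoint : P.map (fun ω => (Z ω, ε₀ ω)) = μ.prod (gaussMeasure d v) := by
    rw [← hε₀law]
    exact (indepFun_iff_map_prod_eq_prod_map_map hZm.aemeasurable hε₀m.aemeasurable).mp hindep
  have hmap : (∫⁻ ω, ENNReal.ofReal
      (‖gradient (fun y : Vec d => Real.log (∫ z, gaussPDF d v (y - z) ∂μ)) ((Z + ε₀) ω)‖ ^ 2) ∂P)
      = ∫⁻ y : Vec d × Vec d, ENNReal.ofReal
        (‖gradient (fun y : Vec d => Real.log (∫ z, gaussPDF d v (y - z) ∂μ)) (y.1 + y.2)‖ ^ 2)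
        ∂(μ.prod (gaussMeasure d v)) := by
    have hhm : Measurable (fun y : Vec d × Vec d => ENNReal.ofReal
        (‖gradient (fun y : Vec d => Real.log (∫ z, gaussPDF d v (y - z) ∂μ)) (y.1 + y.2)‖ ^ 2)) := by
      exact hFm.comp (measurable_fst.add measurable_snd)
    rw [← hjoint, lintegral_map hhm (hZm.prodMk hε₀m)]
    rfl
  calc (∫⁻ ω, ENNReal.ofReal
      (‖gradient (fun y : Vec d => Real.log (∫ z, gaussPDF d v (y - z) ∂μ)) ((Z + ε₀) ω)‖ ^ 2) ∂P)
      = _ := hmap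
    _ ≤ ENNReal.ofReal (v⁻¹ * v⁻¹ * (3 * d * v)) := big_bound μ hv hμ2
    _ ≤ ENNReal.ofReal (3 * (2 * R ^ 2 + (d : ℝ) * v) / τ ^ 4) := by
        apply ENNReal.ofReal_le_ofReal
        have hτ4 : τ ^ 4 = v ^ 2 := by rw [hvdef]; ring
        rw [hτ4]
        have hlhs : v⁻¹ * v⁻¹ * (3 * d * v) = 3 * d / v := by
          field_simp
        rw [hlhs, div_le_div_iff₀ hv (by positivity)]
        nlinarith [hR2, hv, mul_nonneg (Nat.cast_nonneg (α := ℝ) d) hv.le]
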